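/- Let U ⊆ ℝ² be open and let ξ, φ : ℝ² → ℝ² be twice continuously differentiable on U, with ξ divergence-free on U (∂₁ξ¹ + ∂₂ξ² = 0 at every point of U). Then the curl of the SALT operator is the transport of the curl: for every x ∈ U, curl(B_ξφ)(x) = (L_ξ(curl φ))(x), i.e. ∂₁(B_ξφ)²(x) − ∂₂(B_ξφ)¹(x) = Σ_{j=1}^{2} ξ^j(x)·∂_j(∂₁φ² − ∂₂φ¹)(x). -/

import Mathlib

/-!
Since `L_ξ φ + T_ξ φ = ∇(ξ · φ) + (curl φ) ξ^⊥` with `ξ^⊥ = (-ξ², ξ¹)` (Cartan's formula in the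
plane), taking the curl kills the gradient by symmetry of second derivatives and leaves
`curl ((curl φ) ξ^⊥) = div ((curl φ) ξ) = L_ξ (curl φ) + (curl φ) div ξ`.
-/

noncomputable section

/-- Partial derivative in the first coordinate of a scalar function on `ℝ²`. -/
def pd1 (f : ℝ × ℝ → ℝ) (x : ℝ × ℝ) : ℝ := fderiv ℝ f x (1, 0)

/-- Partial derivative in the second coordinate of a scalar function on `ℝ²`. -/
def pd2 (f : ℝ × ℝ → ℝ) (x : ℝ × ℝ) : ℝ := fderiv ℝ f x (0, 1)

/-- The transport operator `(L_ξ φ)^l = ∑_j ξ^j ∂_j φ^l` on vector fields over `ℝ²`. -/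
def Ltrans (ξ φ : ℝ × ℝ → ℝ × ℝ) (x : ℝ × ℝ) : ℝ × ℝ :=
  ((ξ x).1 * pd1 (fun y => (φ y).1) x + (ξ x).2 * pd2 (fun y => (φ y).1) x,
   (ξ x).1 * pd1 (fun y => (φ y).2) x + (ξ x).2 * pd2 (fun y => (φ y).2) x)

/-- The transport operator `L_ξ w = ∑_j ξ^j ∂_j w` on scalar functions over `ℝ²`. -/
def LtransScalar (ξ : ℝ × ℝ → ℝ × ℝ) (w : ℝ × ℝ → ℝ) (x : ℝ × ℝ) : ℝ :=
  (ξ x).1 * pd1 w x + (ξ x).2 * pd2 w x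

/-- The operator `(T_ξ φ)^l = ∑_j φ^j ∂_l ξ^j` on vector fields over `ℝ²`. -/
def Tsalt (ξ φ : ℝ × ℝ → ℝ × ℝ) (x : ℝ × ℝ) : ℝ × ℝ :=
  ((φ x).1 * pd1 (fun y => (ξ y).1) x + (φ x).2 * pd1 (fun y => (ξ y).2) x,
   (φ x).1 * pd2 (fun y => (ξ y).1) x + (φ x).2 * pd2 (fun y => (ξ y).2) x)

/-- The SALT operator `B_ξ φ = L_ξ φ + T_ξ φ`. -/
def SALT (ξ φ : ℝ × ℝ → ℝ × ℝ) (x : ℝ × ℝ) : ℝ × ℝ := Ltrans ξ φ x + Tsalt ξ φ x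

/-- `curl f = ∂₁ f² - ∂₂ f¹` on `ℝ²`. -/
def curl2 (f : ℝ × ℝ → ℝ × ℝ) (x : ℝ × ℝ) : ℝ :=
  pd1 (fun y => (f y).2) x - pd2 (fun y => (f y).1) x

/-- `div f = ∂₁ f¹ + ∂₂ f²` on `ℝ²`. -/
def div2 (f : ℝ × ℝ → ℝ × ℝ) (x : ℝ × ℝ) : ℝ :=
  pd1 (fun y => (f y).1) x + pd2 (fun y => (f y).2) x

open Filter Topology

section PartialDerivatives

variable {f g : ℝ × ℝ → ℝ} {x : ℝ × ℝ}

theorem pd1_add (hf : DifferentiableAt ℝ f x) (hg : DifferentiableAt ℝ g x) :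
    pd1 (fun y => f y + g y) x = pd1 f x + pd1 g x := by
  simp [pd1, fderiv_fun_add hf hg]

theorem pd2_add (hf : DifferentiableAt ℝ f x) (hg : DifferentiableAt ℝ g x) :
    pd2 (fun y => f y + g y) x = pd2 f x + pd2 g x := by
  simp [pd2, fderiv_fun_add hf hg]

theorem pd2_sub (hf : DifferentiableAt ℝ f x) (hg : DifferentiableAt ℝ g x) :
    pd2 (fun y => f y - g y) x = pd2 f x - pd2 g x := by
  simp [pd2, fderiv_fun_sub hf hg]

theorem pd1_mul (hf : DifferentiableAt ℝ f x) (hg : DifferentiableAt ℝ g x) :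
    pd1 (fun y => f y * g y) x = f x * pd1 g x + g x * pd1 f x := by
  simp [pd1, fderiv_fun_mul hf hg]

theorem pd2_mul (hf : DifferentiableAt ℝ f x) (hg : DifferentiableAt ℝ g x) :
    pd2 (fun y => f y * g y) x = f x * pd2 g x + g x * pd2 f x := by
  simp [pd2, fderiv_fun_mul hf hg]

theorem ContDiffAt.differentiableAt_fderiv (hf : ContDiffAt ℝ 2 f x) :
    DifferentiableAt ℝ (fderiv ℝ f) x :=
  (hf.fderiv_right (m := 1) le_rfl).differentiableAt one_ne_zero

theorem ContDiffAt.differentiableAt_pd1 (hf : ContDiffAt ℝ 2 f x) :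
    DifferentiableAt ℝ (pd1 f) x :=
  hf.differentiableAt_fderiv.clm_apply (differentiableAt_const _)

theorem ContDiffAt.differentiableAt_pd2 (hf : ContDiffAt ℝ 2 f x) :
    DifferentiableAt ℝ (pd2 f) x :=
  hf.differentiableAt_fderiv.clm_apply (differentiableAt_const _)

theorem ContDiffAt.pd1_pd2_comm (hf : ContDiffAt ℝ 2 f x) :
    pd1 (pd2 f) x = pd2 (pd1 f) x := by
  have hdf := hf.differentiableAt_fderiv
  change fderiv ℝ (fun y => fderiv ℝ f y (0, 1)) x (1, 0) =
    fderiv ℝ (fun y => fderiv ℝ f y (1, 0)) x (0, 1)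
  simpa [fderiv_clm_apply hdf (differentiableAt_const _)] using
    hf.isSymmSndFDerivAt (by simp) (1, 0) (0, 1)

end PartialDerivatives

def dot2 (ξ φ : ℝ × ℝ → ℝ × ℝ) (y : ℝ × ℝ) : ℝ := (ξ y).1 * (φ y).1 + (ξ y).2 * (φ y).2

section VectorFields

variable {ξ φ : ℝ × ℝ → ℝ × ℝ} {g w : ℝ × ℝ → ℝ} {x : ℝ × ℝ}

theorem SALT_eq_grad_dot2_add_curl2_mul_perp (hξ : DifferentiableAt ℝ ξ x)
    (hφ : DifferentiableAt ℝ φ x) :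
    SALT ξ φ x = (pd1 (dot2 ξ φ) x - (ξ x).2 * curl2 φ x,
      pd2 (dot2 ξ φ) x + (ξ x).1 * curl2 φ x) := by
  have h₁ := hξ.fst.fun_mul hφ.fst
  have h₂ := hξ.snd.fun_mul hφ.snd
  unfold dot2
  rw [pd1_add h₁ h₂, pd2_add h₁ h₂, pd1_mul hξ.fst hφ.fst, pd1_mul hξ.snd hφ.snd,
    pd2_mul hξ.fst hφ.fst, pd2_mul hξ.snd hφ.snd]
  simp only [SALT, Ltrans, Tsalt, curl2, Prod.mk_add_mk]
  congr 1 <;> ring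

theorem curl2_grad_add_mul_perp (hg : ContDiffAt ℝ 2 g x) (hw : DifferentiableAt ℝ w x)
    (hξ : DifferentiableAt ℝ ξ x) :
    curl2 (fun y => (pd1 g y - (ξ y).2 * w y, pd2 g y + (ξ y).1 * w y)) x =
      LtransScalar ξ w x + w x * div2 ξ x := by
  simp only [curl2]
  rw [pd1_add hg.differentiableAt_pd2 (hξ.fst.fun_mul hw),
    pd2_sub hg.differentiableAt_pd1 (hξ.snd.fun_mul hw), pd1_mul hξ.fst hw, pd2_mul hξ.snd hw,
    hg.pd1_pd2_comm]
  simp only [LtransScalar, div2]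
  ring

theorem curl2_congr_of_eventuallyEq {F G : ℝ × ℝ → ℝ × ℝ} (h : F =ᶠ[𝓝 x] G) :
    curl2 F x = curl2 G x := by
  have h1 : (fun y => (F y).1) =ᶠ[𝓝 x] fun y => (G y).1 := h.fun_comp Prod.fst
  have h2 : (fun y => (F y).2) =ᶠ[𝓝 x] fun y => (G y).2 := h.fun_comp Prod.snd
  simp only [curl2, pd1, pd2, h1.fderiv_eq, h2.fderiv_eq]

end VectorFields

/-- For `ξ, φ` twice continuously differentiable on an open set `U ⊆ ℝ²` with `ξ`
divergence-free on `U`, the curl of the SALT operator is the transport of the curl: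
`curl (B_ξ φ) = L_ξ (curl φ)` on `U`. -/
theorem curl_SALT_of_divFree (U : Set (ℝ × ℝ)) (hU : IsOpen U) (ξ φ : ℝ × ℝ → ℝ × ℝ)
    (hξ : ContDiffOn ℝ 2 ξ U) (hφ : ContDiffOn ℝ 2 φ U)
    (hdiv : ∀ y ∈ U, div2 ξ y = 0) (x : ℝ × ℝ) (hx : x ∈ U) :
    curl2 (fun y => SALT ξ φ y) x = LtransScalar ξ (fun y => curl2 φ y) x := by
  have hξx : ContDiffAt ℝ 2 ξ x := hξ.contDiffAt (hU.mem_nhds hx)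
  have hφx : ContDiffAt ℝ 2 φ x := hφ.contDiffAt (hU.mem_nhds hx)
  have hSALT : SALT ξ φ =ᶠ[𝓝 x] fun y =>
      (pd1 (dot2 ξ φ) y - (ξ y).2 * curl2 φ y, pd2 (dot2 ξ φ) y + (ξ y).1 * curl2 φ y) := by
    filter_upwards [hU.mem_nhds hx] with y hy
    exact SALT_eq_grad_dot2_add_curl2_mul_perp
      ((hξ.contDiffAt (hU.mem_nhds hy)).differentiableAt two_ne_zero)
      ((hφ.contDiffAt (hU.mem_nhds hy)).differentiableAt two_ne_zero)
  have hdot : ContDiffAt ℝ 2 (dot2 ξ φ) x :=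
    (hξx.fst.mul hφx.fst).add (hξx.snd.mul hφx.snd)
  have hcurl : DifferentiableAt ℝ (curl2 φ) x :=
    hφx.snd.differentiableAt_pd1.sub hφx.fst.differentiableAt_pd2
  rw [curl2_congr_of_eventuallyEq hSALT,
    curl2_grad_add_mul_perp hdot hcurl (hξx.differentiableAt two_ne_zero), hdiv x hx, mul_zero,
    add_zero]

end
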